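/- The chain-antichain principle restricted to ω-ordered posets implies the full chain-antichain principle: assume every infinite ω-ordered partial order on a subset of ℕ has an infinite chain or an infinite antichain. Then every infinite partial order on a subset of ℕ has an infinite chain or an infinite antichain. -/

import Mathlib

/-!
The part `r ⊓ ≤` of `r` that agrees with the order of `ℕ` is an ω-ordered partial order.
An infinite chain for it is a chain for `r`. On an infinite antichain `X` for it, every
`r`-relation between distinct elements goes against the order of `ℕ`, so the reverse of `r`
is ω-ordered on `X`; a second application of the hypothesis gives an infinite chain or
antichain for the reverse of `r`, which is one for `r`.
-/

/-- A partial order (as a relation) on a set `P ⊆ ℕ`. -/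
def IsPartialOrderOn (P : Set ℕ) (r : ℕ → ℕ → Prop) : Prop :=
  (∀ x ∈ P, r x x) ∧ (∀ x y, r x y → r y x → x = y) ∧
  (∀ x y z, r x y → r y z → r x z)

def IsChainIn (r : ℕ → ℕ → Prop) (X : Set ℕ) : Prop :=
  ∀ x ∈ X, ∀ y ∈ X, r x y ∨ r y x

def IsAntichainIn (r : ℕ → ℕ → Prop) (X : Set ℕ) : Prop :=
  ∀ x ∈ X, ∀ y ∈ X, x ≠ y → ¬r x y ∧ ¬r y x

namespace IsPartialOrderOn

variable {P : Set ℕ} {r : ℕ → ℕ → Prop}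

theorem inf_le (hr : IsPartialOrderOn P r) : IsPartialOrderOn P (fun x y => r x y ∧ x ≤ y) :=
  ⟨fun x hx => ⟨hr.1 x hx, le_rfl⟩,
   fun x y hxy hyx => hr.2.1 x y hxy.1 hyx.1,
   fun x y z hxy hyz => ⟨hr.2.2 x y z hxy.1 hyz.1, hxy.2.trans hyz.2⟩⟩

theorem flip (hr : IsPartialOrderOn P r) : IsPartialOrderOn P (flip r) :=
  ⟨hr.1, fun x y hxy hyx => hr.2.1 y x hxy hyx |>.symm,
   fun x y z hxy hyz => hr.2.2 z y x hyz hxy⟩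

theorem mono {Q : Set ℕ} (hQP : Q ⊆ P) (hr : IsPartialOrderOn P r) : IsPartialOrderOn Q r :=
  ⟨fun x hx => hr.1 x (hQP hx), hr.2⟩

end IsPartialOrderOn

theorem IsChainIn.mono {r s : ℕ → ℕ → Prop} {X : Set ℕ} (hrs : ∀ x y, r x y → s x y)
    (hX : IsChainIn r X) : IsChainIn s X :=
  fun x hx y hy => (hX x hx y hy).imp (hrs x y) (hrs y x)

theorem IsChainIn.of_flip {r : ℕ → ℕ → Prop} {X : Set ℕ} (hX : IsChainIn (flip r) X) :
    IsChainIn r X :=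
  fun x hx y hy => (hX x hx y hy).symm

theorem IsAntichainIn.of_flip {r : ℕ → ℕ → Prop} {X : Set ℕ} (hX : IsAntichainIn (flip r) X) :
    IsAntichainIn r X :=
  fun x hx y hy hxy => (hX x hx y hy hxy).symm

theorem IsAntichainIn.le_of_flip_inf_le {r : ℕ → ℕ → Prop} {X : Set ℕ}
    (hX : IsAntichainIn (fun x y => r x y ∧ x ≤ y) X) {x y : ℕ} (hx : x ∈ X) (hy : y ∈ X)
    (hyx : r y x) : x ≤ y := by
  rcases eq_or_ne x y with rfl | hxy
  · exact le_rfl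
  · exact le_of_not_ge fun hyx' => (hX x hx y hy hxy).2 ⟨hyx, hyx'⟩

/-- CAC restricted to ω-ordered posets implies full CAC. -/
theorem stmt4
    (h : ∀ (P : Set ℕ) (r : ℕ → ℕ → Prop), IsPartialOrderOn P r → P.Infinite →
      (∀ x y, x ∈ P → y ∈ P → r x y → x ≤ y) →
      ∃ X ⊆ P, X.Infinite ∧ (IsChainIn r X ∨ IsAntichainIn r X)) :
    ∀ (P : Set ℕ) (r : ℕ → ℕ → Prop), IsPartialOrderOn P r → P.Infinite →
      ∃ X ⊆ P, X.Infinite ∧ (IsChainIn r X ∨ IsAntichainIn r X) := by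
  intro P r hr hP
  obtain ⟨X, hXP, hX, hchain | hantichain⟩ :=
    h P _ hr.inf_le hP fun x y _ _ hxy => hxy.2
  · exact ⟨X, hXP, hX, .inl (hchain.mono fun x y hxy => hxy.1)⟩
  obtain ⟨Y, hYX, hY, hchain' | hantichain'⟩ :=
    h X (flip r) (hr.flip.mono hXP) hX fun x y hx hy hxy => hantichain.le_of_flip_inf_le hx hy hxy
  · exact ⟨Y, hYX.trans hXP, hY, .inl hchain'.of_flip⟩
  · exact ⟨Y, hYX.trans hXP, hY, .inr hantichain'.of_flip⟩
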